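/- arXiv:1405.4998 — 3 statements merged into one kernel-verified Lean document; each statement's English description precedes it below -/
import Mathlib

section
/- Let n and r be positive integers with n·r ≥ 2. Then there is exactly one r-multipartition λ of n with s(λ) = 1, where s(λ) = Σ_{i=1}^r ( r·|λ^(i)| − i·ℓ(λ^(i)) ). Explicitly: if r ≥ 2, the unique such λ has λ^(r−1) = (1), λ^(r) = (1^{n−1}) (the partition of n−1 with all parts equal to 1, empty when n = 1), and λ^(i) = ∅ for all other i; if r = 1 (so n ≥ 2), the unique such λ is the partition (2,1^{n−2}) of n. -/
/-- The statistic `s(λ) = Σ_{i=1}^r ( r·|λ^(i)| − i·ℓ(λ^(i)) )` attached to an `r`-tuple of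
partitions (each partition encoded as the multiset of its parts); the index `i : Fin r`
corresponds to the component `λ^(i+1)`, so the factor is `(i : ℕ) + 1`. -/
def giesekerStat (r : ℕ) (lam : Fin r → Multiset ℕ) : ℤ :=
  ∑ i : Fin r,
    ((r : ℤ) * ((lam i).sum : ℤ) - (((i : ℕ) : ℤ) + 1) * ((lam i).card : ℤ))

/-- The explicit `r`-multipartition of `n` with `s(λ) = 1`: for `r ≥ 2` it has
`λ^(r−1) = (1)`, `λ^(r) = (1^{n−1})` and all other components empty; for `r = 1`
it is the partition `(2,1^{n−2})` of `n`. -/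
def theMultipartition (n r : ℕ) : Fin r → Multiset ℕ := fun i =>
  if r = 1 then 2 ::ₘ Multiset.replicate (n - 2) 1
  else if (i : ℕ) = r - 2 then ({1} : Multiset ℕ)
  else if (i : ℕ) = r - 1 then Multiset.replicate (n - 1) 1
  else 0

/-! Write `Sᵢ = |λ^(i)|` and `Lᵢ = ℓ(λ^(i))`. Parts are positive, so `Lᵢ ≤ Sᵢ`, and the `i`-th
summand of `s(λ)` is `r (Sᵢ - Lᵢ) + (r - i) Lᵢ`, a sum of two natural numbers.
For `r = 1` this reads `s(λ) = S₁ - L₁`, and a partition of size one more than its length is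
`(2, 1^k)`. For `r ≥ 2`, `s(λ) = 1` forces `Sᵢ = Lᵢ` for every `i`, so each `λ^(i)` is `(1^{Lᵢ})`,
and then `Σ (r - i) Lᵢ = 1` forces `L_{r-1} = 1` and `Lᵢ = 0` for `i < r - 1`; the size `n`
determines `L_r = n - 1`. -/

open Multiset

theorem Finset.exists_eq_one_of_sum_eq_one {ι : Type*} {s : Finset ι} {f : ι → ℕ}
    (h : ∑ i ∈ s, f i = 1) : ∃ j ∈ s, f j = 1 ∧ ∀ i ∈ s, i ≠ j → f i = 0 := by
  classical
  obtain ⟨j, hj, hfj⟩ := exists_ne_zero_of_sum_ne_zero (h.trans_ne one_ne_zero)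
  refine ⟨j, hj, ?_, fun i hi hij => ?_⟩
  · have := single_le_sum (fun i _ => Nat.zero_le (f i)) hj
    omega
  · have := sum_le_sum_of_subset (f := f) (insert_subset hi (singleton_subset_iff.2 hj))
    rw [sum_pair hij] at this
    omega

namespace Multiset

theorem card_le_sum_of_pos {m : Multiset ℕ} (h : ∀ x ∈ m, 0 < x) : card m ≤ m.sum := by
  simpa using card_nsmul_le_sum h

theorem eq_replicate_one_of_sum_eq_card {m : Multiset ℕ} (h : ∀ x ∈ m, 0 < x)
    (hs : m.sum = card m) : m = replicate (card m) 1 := by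
  refine eq_replicate_card.2 fun b hb => ?_
  obtain ⟨t, rfl⟩ := exists_cons_of_mem hb
  have ht := card_le_sum_of_pos fun x hx => h x (mem_cons_of_mem hx)
  have hb₀ := h b (mem_cons_self b t)
  rw [sum_cons, card_cons] at hs
  omega

theorem eq_two_cons_replicate_one_of_sum_eq_card_add_one {m : Multiset ℕ}
    (h : ∀ x ∈ m, 0 < x) (hs : m.sum = card m + 1) :
    m = 2 ::ₘ replicate (card m - 1) 1 := by
  obtain ⟨b, hb, hb₁⟩ : ∃ b ∈ m, b ≠ 1 := by
    by_contra! hall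
    rw [eq_replicate_card.2 hall] at hs
    simp at hs
  obtain ⟨t, rfl⟩ := exists_cons_of_mem hb
  have ht : ∀ x ∈ t, 0 < x := fun x hx => h x (mem_cons_of_mem hx)
  have hb₀ := h b (mem_cons_self b t)
  have := card_le_sum_of_pos ht
  rw [sum_cons, card_cons] at hs
  obtain rfl : b = 2 := by omega
  rw [card_cons, Nat.add_sub_cancel, ← eq_replicate_one_of_sum_eq_card ht (by omega)]

end Multiset

section Gieseker

variable {n r : ℕ} {lam : Fin r → Multiset ℕ}

theorem giesekerStat_eq_of_pos (hpos : ∀ i, ∀ x ∈ lam i, 0 < x) :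
    giesekerStat r lam = ((r * ∑ i, ((lam i).sum - card (lam i)) +
      ∑ i : Fin r, (r - ((i : ℕ) + 1)) * card (lam i) : ℕ) : ℤ) := by
  rw [giesekerStat, Finset.mul_sum, ← Finset.sum_add_distrib, Nat.cast_sum]
  refine Finset.sum_congr rfl fun i _ => ?_
  have hL := card_le_sum_of_pos (hpos i)
  push_cast [Nat.cast_sub hL, Nat.cast_sub (show (i : ℕ) + 1 ≤ r from i.isLt)]
  ring

theorem sum_eq_card_of_giesekerStat_eq_one (hr : 2 ≤ r) (hpos : ∀ i, ∀ x ∈ lam i, 0 < x)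
    (hstat : giesekerStat r lam = 1) :
    (∀ i, (lam i).sum = card (lam i)) ∧ ∑ i : Fin r, (r - ((i : ℕ) + 1)) * card (lam i) = 1 := by
  rw [giesekerStat_eq_of_pos hpos, Nat.cast_eq_one] at hstat
  set E := ∑ i, ((lam i).sum - card (lam i))
  have hE : E = 0 := by
    by_contra hE
    have : r ≤ r * E := Nat.le_mul_of_pos_right r (Nat.pos_of_ne_zero hE)
    omega
  rw [hE, mul_zero, zero_add] at hstat
  refine ⟨fun i => ?_, hstat⟩
  have := card_le_sum_of_pos (hpos i)
  have := (Finset.sum_eq_zero_iff.1 hE) i (Finset.mem_univ i)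
  omega

def lengthProfile (n r : ℕ) (i : Fin r) : ℕ :=
  if (i : ℕ) = r - 2 then 1 else if (i : ℕ) = r - 1 then n - 1 else 0

theorem theMultipartition_eq_replicate_lengthProfile (hr : r ≠ 1) :
    theMultipartition n r = fun i => replicate (lengthProfile n r i) 1 := by
  funext i
  simp only [theMultipartition, lengthProfile, hr, if_false]
  split_ifs <;> simp

theorem eq_lengthProfile_iff (hn : 0 < n) (hr : 2 ≤ r) (L : Fin r → ℕ) :
    (∑ i : Fin r, (r - ((i : ℕ) + 1)) * L i = 1 ∧ ∑ i, L i = n) ↔ L = lengthProfile n r := by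
  set a : Fin r := ⟨r - 2, by omega⟩
  set b : Fin r := ⟨r - 1, by omega⟩
  have hab : a ≠ b := Fin.ne_of_val_ne (by dsimp [a, b]; omega)
  have hwa : r - ((a : ℕ) + 1) = 1 := by dsimp [a]; omega
  have hwb : r - ((b : ℕ) + 1) = 0 := by dsimp [b]; omega
  have hprofile_a : lengthProfile n r a = 1 := if_pos rfl
  have hprofile_b : lengthProfile n r b = n - 1 := by
    change (if r - 1 = r - 2 then 1 else if r - 1 = r - 1 then n - 1 else 0) = n - 1
    rw [if_neg (by omega), if_pos rfl]
  have hprofile : ∀ i, i ≠ a ∧ i ≠ b → lengthProfile n r i = 0 := fun i ⟨hia, hib⟩ =>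
    if_neg (fun h => hia (Fin.ext h)) |>.trans (if_neg fun h => hib (Fin.ext h))
  constructor
  · rintro ⟨hweight, hsum⟩
    obtain ⟨j, -, hj, hzero⟩ := Finset.exists_eq_one_of_sum_eq_one hweight
    obtain rfl : j = a := Fin.ext (by have := Nat.eq_one_of_mul_eq_one_right hj; dsimp [a]; omega)
    have hLa : L a = 1 := Nat.eq_one_of_mul_eq_one_left hj
    have hrest : ∀ i, i ≠ a ∧ i ≠ b → L i = 0 := fun i ⟨hia, hib⟩ => by
      refine (Nat.mul_eq_zero.1 (hzero i (Finset.mem_univ i) hia)).resolve_left fun h => hib ?_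
      exact Fin.ext (by dsimp [b]; omega)
    have hLb : L b = n - 1 := by
      rw [Fintype.sum_eq_add a b hab hrest] at hsum
      omega
    funext i
    by_cases hia : i = a
    · rw [hia, hLa, hprofile_a]
    by_cases hib : i = b
    · rw [hib, hLb, hprofile_b]
    rw [hrest i ⟨hia, hib⟩, hprofile i ⟨hia, hib⟩]
  · rintro rfl
    constructor
    · rw [Fintype.sum_eq_add a b hab fun i hi => by rw [hprofile i hi, mul_zero],
        hprofile_a, hprofile_b, hwa, hwb, mul_one, zero_mul, add_zero]
    · rw [Fintype.sum_eq_add a b hab hprofile, hprofile_a, hprofile_b]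
      omega

theorem theMultipartition_spec_of_two_le (hn : 0 < n) (hr : 2 ≤ r) :
    (∀ i, ∀ x ∈ theMultipartition n r i, 0 < x) ∧
      ∑ i, (theMultipartition n r i).sum = n ∧ giesekerStat r (theMultipartition n r) = 1 := by
  obtain ⟨hweight, hsum⟩ := (eq_lengthProfile_iff hn hr _).2 rfl
  rw [theMultipartition_eq_replicate_lengthProfile (by omega)]
  have hpos : ∀ i, ∀ x ∈ replicate (lengthProfile n r i) 1, 0 < x :=
    fun i x hx => (eq_of_mem_replicate hx).symm ▸ Nat.one_pos
  refine ⟨hpos, by simpa using hsum, ?_⟩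
  rw [giesekerStat_eq_of_pos hpos]
  simp [hweight]

theorem eq_theMultipartition_of_two_le (hn : 0 < n) (hr : 2 ≤ r)
    (hpos : ∀ i, ∀ x ∈ lam i, 0 < x) (hsum : ∑ i, (lam i).sum = n)
    (hstat : giesekerStat r lam = 1) : lam = theMultipartition n r := by
  obtain ⟨hsum_card, hweight⟩ := sum_eq_card_of_giesekerStat_eq_one hr hpos hstat
  simp only [hsum_card] at hsum
  have hcard := (eq_lengthProfile_iff hn hr (fun i => card (lam i))).1 ⟨hweight, hsum⟩
  rw [theMultipartition_eq_replicate_lengthProfile (by omega), ← hcard]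
  exact funext fun i => eq_replicate_one_of_sum_eq_card (hpos i) (hsum_card i)

end Gieseker

theorem theMultipartition_one (n : ℕ) :
    theMultipartition n 1 = fun _ => 2 ::ₘ replicate (n - 2) 1 := rfl

theorem giesekerStat_one (lam : Fin 1 → Multiset ℕ) :
    giesekerStat 1 lam = (lam 0).sum - card (lam 0) := by
  simp [giesekerStat]

theorem theMultipartition_one_spec {n : ℕ} (hn : 2 ≤ n) :
    (∀ i, ∀ x ∈ theMultipartition n 1 i, 0 < x) ∧
      ∑ i, (theMultipartition n 1 i).sum = n ∧ giesekerStat 1 (theMultipartition n 1) = 1 := by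
  rw [theMultipartition_one]
  refine ⟨fun i x hx => ?_, ?_, ?_⟩
  · rcases mem_cons.1 hx with rfl | hx
    · exact two_pos
    · exact (eq_of_mem_replicate hx).symm ▸ Nat.one_pos
  · rw [Fin.sum_univ_one, sum_cons, sum_replicate, smul_eq_mul, mul_one]
    omega
  · rw [giesekerStat_one, sum_cons, sum_replicate, smul_eq_mul, mul_one, card_cons,
      card_replicate]
    omega

theorem eq_theMultipartition_one {n : ℕ} {lam : Fin 1 → Multiset ℕ}
    (hpos : ∀ i, ∀ x ∈ lam i, 0 < x) (hsum : ∑ i, (lam i).sum = n)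
    (hstat : giesekerStat 1 lam = 1) : lam = theMultipartition n 1 := by
  rw [Fin.sum_univ_one] at hsum
  rw [giesekerStat_one] at hstat
  have hlam := eq_two_cons_replicate_one_of_sum_eq_card_add_one (hpos 0) (by omega)
  rw [theMultipartition_one]
  funext i
  have hcard : card (lam 0) - 1 = n - 2 := by omega
  rw [Subsingleton.elim i 0, hlam, hcard]

theorem stmt1_general (n r : ℕ) (hnr : 2 ≤ n * r) :
    ((∀ i : Fin r, ∀ x ∈ theMultipartition n r i, 0 < x) ∧
      (∑ i : Fin r, (theMultipartition n r i).sum) = n ∧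
      giesekerStat r (theMultipartition n r) = 1) ∧
    (∀ lam : Fin r → Multiset ℕ,
      (∀ i : Fin r, ∀ x ∈ lam i, 0 < x) →
      (∑ i : Fin r, (lam i).sum) = n →
      giesekerStat r lam = 1 →
      lam = theMultipartition n r) := by
  have hn : n ≠ 0 := by rintro rfl; simp at hnr
  have hr₀ : r ≠ 0 := by rintro rfl; simp at hnr
  obtain rfl | hr : r = 1 ∨ 2 ≤ r := by omega
  · have hn₂ : 2 ≤ n := by simpa using hnr
    exact ⟨theMultipartition_one_spec hn₂, fun _ => eq_theMultipartition_one⟩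
  · exact ⟨theMultipartition_spec_of_two_le (by omega) hr,
      fun _ => eq_theMultipartition_of_two_le (by omega) hr⟩

/-- If `n·r ≥ 2`, there is exactly one `r`-multipartition `λ` of `n` with `s(λ) = 1`,
namely `theMultipartition n r`. -/
theorem stmt1 (n r : ℕ) (hn : 0 < n) (hr : 0 < r) (hnr : 2 ≤ n * r) :
    ((∀ i : Fin r, ∀ x ∈ theMultipartition n r i, 0 < x) ∧
      (∑ i : Fin r, (theMultipartition n r i).sum) = n ∧
      giesekerStat r (theMultipartition n r) = 1) ∧
    (∀ lam : Fin r → Multiset ℕ,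
      (∀ i : Fin r, ∀ x ∈ lam i, 0 < x) →
      (∑ i : Fin r, (lam i).sum) = n →
      giesekerStat r lam = 1 →
      lam = theMultipartition n r) :=
  stmt1_general n r hnr
end

section
/- Let A be an associative unital ring and ℏ ∈ A a central element that is not a zero divisor, such that the quotient ring Ā = A/ℏA is commutative. Let f_1,…,f_k ∈ A be elements whose images f̄_1,…,f̄_k in Ā form a regular sequence, and let I = A f_1 + … + A f_k be the left ideal of A generated by the f_i. Assume moreover that for all i, j the commutator f_i f_j − f_j f_i lies in ℏI. Then I is ℏ-saturated: for every a ∈ A, if ℏa ∈ I then a ∈ I. -/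
open Finset

/-!
Write `ℏa = ∑ cᵢ fᵢ`. Modulo `ℏ` the coefficients form a syzygy of the regular sequence `f̄`, and
the first Koszul homology of a regular sequence vanishes, so `cᵢ ≡ ∑ⱼ (eᵢⱼ - eⱼᵢ) fⱼ (mod ℏ)`.
Substituting, `∑ cᵢ fᵢ ≡ ∑ᵢⱼ eᵢⱼ (fⱼ fᵢ - fᵢ fⱼ)`, and both the error term and the commutators lie
in `ℏI`. Hence `ℏa = ℏw` with `w ∈ I`, and `a = w` since `ℏ` is not a zero divisor.
-/

theorem Fin.image_Iio_last {α : Type*} {k : ℕ} (f : Fin (k + 1) → α) :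
    f '' Set.Iio (Fin.last k) = Set.range fun i : Fin k => f i.castSucc := by
  rw [← Function.comp_def, Set.range_comp, Fin.range_castSucc]; rfl

theorem exists_koszul_of_sum_mul_eq_zero {R : Type*} [CommRing R] {k : ℕ} (f : Fin k → R)
    (hreg : ∀ m a, f m * a ∈ Ideal.span (f '' Set.Iio m) → a ∈ Ideal.span (f '' Set.Iio m))
    (c : Fin k → R) (hc : ∑ i, c i * f i = 0) :
    ∃ e : Fin k → Fin k → R, ∀ i, c i = ∑ j, (e i j - e j i) * f j := by
  induction k with
  | zero => exact ⟨0, fun i => i.elim0⟩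
  | succ k ih =>
    rw [Fin.sum_univ_castSucc] at hc
    obtain ⟨g, hg⟩ : ∃ g : Fin k → R, ∑ i, g i * f i.castSucc = c (Fin.last k) := by
      rw [← Ideal.mem_span_range_iff_exists_fun, ← Fin.image_Iio_last]
      refine hreg _ _ ?_
      rw [Fin.image_Iio_last, mul_comm, eq_neg_of_add_eq_zero_right hc]
      exact neg_mem (Ideal.sum_mem _ fun i _ => Ideal.mul_mem_left _ _ (Ideal.subset_span ⟨i, rfl⟩))
    -- `cᵢ + gᵢ f_last` is a syzygy of the first `k` elements, and `g` becomes the last row of `e`.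
    obtain ⟨e, he⟩ := ih (f ∘ Fin.castSucc)
      (fun m a => by rw [Set.image_comp, Fin.image_castSucc_Iio]; exact hreg m.castSucc a)
      (fun i => c i.castSucc + g i * f (Fin.last k))
      (by
        simp only [Function.comp_apply, add_mul, sum_add_distrib]
        rw [← hc, ← hg, sum_mul]
        congr 1
        exact sum_congr rfl fun i _ => by ring)
    simp only [Function.comp_apply] at he
    refine ⟨Fin.snoc (fun i => Fin.snoc (e i) 0) (Fin.snoc g 0), Fin.lastCases ?_ fun i => ?_⟩
    · simp [Fin.sum_univ_castSucc, hg]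
    · simp [Fin.sum_univ_castSucc, ← he i]

theorem Ideal.isTwoSided_span_singleton {A : Type*} [Ring A] {h : A}
    (hcentral : ∀ a : A, h * a = a * h) : (Ideal.span {h}).IsTwoSided where
  mul_mem_of_left b hx := by
    obtain ⟨a, rfl⟩ := Ideal.mem_span_singleton'.1 hx
    rw [mul_assoc, hcentral, ← mul_assoc]
    exact Ideal.mul_mem_left _ _ (Ideal.mem_span_singleton_self h)

abbrev Ideal.Quotient.commRingOfCommutatorMem {A : Type*} [Ring A] (J : Ideal A) [J.IsTwoSided]
    (hJ : ∀ a b : A, a * b - b * a ∈ J) : CommRing (A ⧸ J) where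
  mul_comm x y := by
    obtain ⟨a, rfl⟩ := Ideal.Quotient.mk_surjective x
    obtain ⟨b, rfl⟩ := Ideal.Quotient.mk_surjective y
    exact Ideal.Quotient.eq.2 (hJ a b)

theorem Ideal.Quotient.mk_mem_span_image_iff {A : Type*} [Ring A] (J : Ideal A) [J.IsTwoSided]
    (T : Set A) (x : A) :
    Ideal.Quotient.mk J x ∈ Ideal.span (Ideal.Quotient.mk J '' T) ↔ x ∈ J ⊔ Ideal.span T := by
  rw [← Ideal.map_span, ← Ideal.mem_comap,
    Ideal.comap_map_of_surjective _ Ideal.Quotient.mk_surjective, ← RingHom.ker_eq_comap_bot,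
    Ideal.mk_ker, sup_comm]

theorem sum_koszul_mul_eq_sum_mul_commutator {A ι : Type*} [Ring A] [Fintype ι] (f : ι → A)
    (e : ι → ι → A) :
    ∑ i, (∑ j, (e i j - e j i) * f j) * f i = ∑ i, ∑ j, e i j * (f j * f i - f i * f j) := by
  simp only [sum_mul, sub_mul, mul_sub, sum_sub_distrib, mul_assoc]
  rw [sum_comm (f := fun i j => e j i * (f j * f i))]

theorem exists_koszul_modulo_of_sum_mul_mem {A : Type*} [Ring A] {h : A}
    (hcentral : ∀ a : A, h * a = a * h) (hcomm : ∀ a b : A, ∃ c : A, a * b - b * a = h * c)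
    {k : ℕ} (f : Fin k → A)
    (hreg : ∀ m a, f m * a ∈ Ideal.span ({h} ∪ f '' Set.Iio m) →
      a ∈ Ideal.span ({h} ∪ f '' Set.Iio m))
    (c : Fin k → A) (hc : ∑ i, c i * f i ∈ Ideal.span {h}) :
    ∃ e : Fin k → Fin k → A, ∀ i, c i - ∑ j, (e i j - e j i) * f j ∈ Ideal.span {h} := by
  set J := Ideal.span {h}
  have : J.IsTwoSided := Ideal.isTwoSided_span_singleton hcentral
  let := Ideal.Quotient.commRingOfCommutatorMem J fun a b => by
    obtain ⟨c, hc⟩ := hcomm a b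
    rw [hc, hcentral]
    exact Ideal.mul_mem_left _ _ (Ideal.mem_span_singleton_self h)
  have hmem (S : Set (Fin k)) (x : A) :
      Ideal.Quotient.mk J x ∈ Ideal.span ((Ideal.Quotient.mk J ∘ f) '' S) ↔
        x ∈ Ideal.span ({h} ∪ f '' S) := by
    rw [Set.image_comp, Ideal.Quotient.mk_mem_span_image_iff, Ideal.span_union]
  obtain ⟨ē, hē⟩ := exists_koszul_of_sum_mul_eq_zero (Ideal.Quotient.mk J ∘ f)
    (fun m a => by
      obtain ⟨a, rfl⟩ := Ideal.Quotient.mk_surjective a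
      rw [Function.comp_apply, ← map_mul, hmem, hmem]
      exact hreg m a)
    (Ideal.Quotient.mk J ∘ c) (by simpa only [Function.comp_apply, ← map_mul, ← map_sum,
      Ideal.Quotient.eq_zero_iff_mem] using hc)
  choose e he using fun i j => Ideal.Quotient.mk_surjective (ē i j)
  refine ⟨e, fun i => ?_⟩
  rw [← Ideal.Quotient.eq_zero_iff_mem, map_sub, map_sum, sub_eq_zero]
  simpa [he] using hē i

theorem exists_sum_mul_eq_mul_of_koszul {A ι : Type*} [Ring A] [Fintype ι] {h : A}
    (hcentral : ∀ a : A, h * a = a * h) (f : ι → A)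
    (hcomm : ∀ i j, ∃ c ∈ Ideal.span (Set.range f), f i * f j - f j * f i = h * c)
    (c : ι → A) (e : ι → ι → A)
    (he : ∀ i, c i - ∑ j, (e i j - e j i) * f j ∈ Ideal.span {h}) :
    ∃ w ∈ Ideal.span (Set.range f), ∑ i, c i * f i = h * w := by
  choose u hu using fun i => Ideal.mem_span_singleton'.1 (he i)
  choose w hwI hw using hcomm
  have hf (i : ι) : f i ∈ Ideal.span (Set.range f) := Ideal.subset_span ⟨i, rfl⟩
  refine ⟨∑ i, u i * f i + ∑ i, ∑ j, e i j * w j i,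
    add_mem (sum_mem fun i _ => Ideal.mul_mem_left _ _ (hf i))
      (sum_mem fun i _ => sum_mem fun j _ => Ideal.mul_mem_left _ _ (hwI j i)), ?_⟩
  calc ∑ i, c i * f i
      = ∑ i, u i * h * f i + ∑ i, (∑ j, (e i j - e j i) * f j) * f i := by
        rw [← sum_add_distrib]
        exact sum_congr rfl fun i _ => by rw [← add_mul, hu, sub_add_cancel]
    _ = ∑ i, u i * h * f i + ∑ i, ∑ j, e i j * (h * w j i) := by
        simp only [sum_koszul_mul_eq_sum_mul_commutator, hw]
    _ = h * (∑ i, u i * f i + ∑ i, ∑ j, e i j * w j i) := by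
        have hleft (x y : A) : x * (h * y) = h * (x * y) := Commute.left_comm (hcentral x).symm y
        simp only [mul_assoc, hleft, mul_add, mul_sum]

theorem stmt6_general (A : Type*) [Ring A] (h : A)
    (hcentral : ∀ a : A, h * a = a * h)
    (hnzd : ∀ a : A, h * a = 0 → a = 0)
    (hcommA : ∀ a b : A, ∃ c : A, a * b - b * a = h * c)
    (k : ℕ) (f : Fin k → A)
    -- the images `f̄ i` form a regular sequence in `A/hA`:
    (hreg : ∀ m : Fin k, ∀ a : A,
      f m * a ∈ Submodule.span A ({h} ∪ f '' {i : Fin k | i < m}) →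
      a ∈ Submodule.span A ({h} ∪ f '' {i : Fin k | i < m}))
    -- all commutators `f i * f j − f j * f i` lie in `ℏI`:
    (hcommf : ∀ i j : Fin k, ∃ c ∈ Submodule.span A (Set.range f),
      f i * f j - f j * f i = h * c)
    (a : A) (ha : h * a ∈ Submodule.span A (Set.range f)) :
    a ∈ Submodule.span A (Set.range f) := by
  obtain ⟨c, hc⟩ := (Submodule.mem_span_range_iff_exists_fun A).1 ha
  simp only [smul_eq_mul] at hc
  have hc_mem : ∑ i, c i * f i ∈ Ideal.span {h} := by
    rw [hc, hcentral]
    exact Ideal.mul_mem_left _ _ (Ideal.mem_span_singleton_self h)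
  obtain ⟨e, he⟩ := exists_koszul_modulo_of_sum_mul_mem hcentral hcommA f hreg c hc_mem
  obtain ⟨w, hwI, hw⟩ := exists_sum_mul_eq_mul_of_koszul hcentral f hcommf c e he
  obtain rfl : a = w := sub_eq_zero.1 (hnzd _ (by rw [mul_sub, ← hc, hw, sub_self]))
  exact hwI

/-- Let `A` be an associative unital ring and `ℏ = h ∈ A` a central non-zero-divisor such
that `A/ℏA` is commutative (every commutator lies in `ℏA`). Let `f : Fin k → A` be
elements whose images in `A/ℏA` form a regular sequence, and let `I` be the left ideal of
`A` generated by the `f i`. If all commutators `f i * f j − f j * f i` lie in `ℏI`, then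
`I` is ℏ-saturated: `ℏa ∈ I` implies `a ∈ I`. -/
theorem stmt6 (A : Type*) [Ring A] (h : A)
    (hcentral : ∀ a : A, h * a = a * h)
    (hnzd : ∀ a : A, h * a = 0 → a = 0)
    (hcommA : ∀ a b : A, ∃ c : A, a * b - b * a = h * c)
    (k : ℕ) (f : Fin k → A)
    -- the images `f̄ i` form a regular sequence in `A/hA`:
    (hreg : ∀ m : Fin k, ∀ a : A,
      f m * a ∈ Submodule.span A ({h} ∪ f '' {i : Fin k | i < m}) →
      a ∈ Submodule.span A ({h} ∪ f '' {i : Fin k | i < m}))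
    (hproper : (1 : A) ∉ Submodule.span A ({h} ∪ Set.range f))
    -- all commutators `f i * f j − f j * f i` lie in `ℏI`:
    (hcommf : ∀ i j : Fin k, ∃ c ∈ Submodule.span A (Set.range f),
      f i * f j - f j * f i = h * c)
    (a : A) (ha : h * a ∈ Submodule.span A (Set.range f)) :
    a ∈ Submodule.span A (Set.range f) :=
  stmt6_general A h hcentral hnzd hcommA k f hreg hcommf a ha
end

section
/- Fix an integer N ≥ 2. Let E be a finite-dimensional unital associative ℂ-algebra together with idempotents e_1,…,e_N satisfying e_i e_j = δ_{ij} e_i and e_1 + … + e_N = 1, such that: (i) e_1 E e_1 = ℂ e_1; (ii) dim_ℂ e_i E e_i = 2 for 2 ≤ i ≤ N; (iii) dim_ℂ e_i E e_j = 1 when |i − j| = 1, and e_i E e_j = 0 when |i − j| ≥ 2; (iv) for each 1 ≤ i ≤ N−1 and all nonzero x ∈ e_i E e_{i+1} and y ∈ e_{i+1} E e_i, the product y·x is a nonzero nilpotent element of e_{i+1} E e_{i+1}, and, when additionally i ≥ 2, the product x·y is a nonzero nilpotent element of e_i E e_i. Then the data (E, (e_i)) is unique up to isomorphism: if (E, (e_i))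 and (E', (e'_i)) both satisfy (i)–(iv) for the same N, there exists a ℂ-algebra isomorphism E → E' sending e_i to e'_i for every i. In particular dim_ℂ E = 4N − 3. -/
/-- The "corner" subspace `x·E·y = {x a y : a ∈ E}` of a ℂ-algebra `E`. -/
noncomputable def corner (E : Type*) [Ring E] [Algebra ℂ E] (x y : E) : Submodule ℂ E :=
  LinearMap.range ((LinearMap.mulRight ℂ y).comp (LinearMap.mulLeft ℂ x))

/-- The conditions (i)–(iv) on a ℂ-algebra `E` with a complete family of orthogonal
idempotents `e_1, …, e_N` (zero-indexed as `e 0, …, e (N-1)`):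
(i) `e_1 E e_1 = ℂ e_1`; (ii) `dim e_i E e_i = 2` for `2 ≤ i ≤ N`;
(iii) `dim e_i E e_j = 1` for `|i−j| = 1` and `e_i E e_j = 0` for `|i−j| ≥ 2`;
(iv) for nonzero `x ∈ e_i E e_{i+1}` and `y ∈ e_{i+1} E e_i`, the product `y·x` is a
nonzero nilpotent, and so is `x·y` when moreover `i ≥ 2`. -/
def CornerData (N : ℕ) (hN : 2 ≤ N) (E : Type*) [Ring E] [Algebra ℂ E]
    (e : Fin N → E) : Prop :=
  (∀ i j : Fin N, e i * e j = if i = j then e i else 0) ∧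
  (∑ i : Fin N, e i = 1) ∧
  -- (i)
  (∀ a : E, ∃ c : ℂ, e ⟨0, by omega⟩ * a * e ⟨0, by omega⟩ = c • e ⟨0, by omega⟩) ∧
  -- (ii)
  (∀ i : Fin N, 1 ≤ (i : ℕ) → Module.finrank ℂ (corner E (e i) (e i)) = 2) ∧
  -- (iii)
  (∀ i j : Fin N, ((i : ℕ) + 1 = (j : ℕ) ∨ (j : ℕ) + 1 = (i : ℕ)) →
    Module.finrank ℂ (corner E (e i) (e j)) = 1) ∧
  (∀ i j : Fin N, ((i : ℕ) + 2 ≤ (j : ℕ) ∨ (j : ℕ) + 2 ≤ (i : ℕ)) →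
    corner E (e i) (e j) = ⊥) ∧
  -- (iv)
  (∀ (i : ℕ) (hi : i + 1 < N),
    ∀ x ∈ corner E (e ⟨i, by omega⟩) (e ⟨i + 1, hi⟩), x ≠ 0 →
    ∀ y ∈ corner E (e ⟨i + 1, hi⟩) (e ⟨i, by omega⟩), y ≠ 0 →
      (y * x ≠ 0 ∧ IsNilpotent (y * x) ∧
        (1 ≤ i → (x * y ≠ 0 ∧ IsNilpotent (x * y)))))

/-!
Choose nonzero arrows `x_j ∈ e_j E e_{j+1}` and `y_j ∈ e_{j+1} E e_j` (vertices `0, …, N-1`).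
By (i) and (iv), `x_0 y_0 = 0`; for `j ≥ 1`, `x_j y_j` and `y_{j-1} x_{j-1}` are nonzero
nilpotents of the two-dimensional algebra `e_j E e_j`, whose nilpotent elements form a line,
so after rescaling the `x_j` one gets `x_j y_j = y_{j-1} x_{j-1}`. Corner by corner, the
dimensions in (i)–(iii) show that the `e_p`, `x_j`, `y_j` and `z_j = y_j x_j` form a basis of
`E`, of size `4N - 3`. Its multiplication table is forced: products of three arrows vanish
because `e_i E e_j = 0` for `|i - j| ≥ 2`. Hence the linear map matching the bases of `E` and
`E'` is an algebra isomorphism.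
-/

open Module Submodule

theorem CompleteOrthogonalIdempotents.sum_sum_mul_mul {R I : Type*} [Semiring R] [Fintype I]
    {e : I → R} (he : CompleteOrthogonalIdempotents e) (a : R) :
    ∑ p, ∑ q, e p * a * e q = a := by
  simp_rw [← Finset.mul_sum, ← Finset.sum_mul, he.complete, one_mul, mul_one]

theorem Submodule.exists_mem_ne_zero_of_finrank_ne_zero {K V : Type*} [DivisionRing K]
    [AddCommGroup V] [Module K V] {S : Submodule K V} (h : finrank K S ≠ 0) :
    ∃ v ∈ S, v ≠ 0 :=
  exists_mem_ne_zero_of_ne_bot fun hS => h (by rw [hS, finrank_bot])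

section Corner

variable {E : Type*} [Ring E] [Algebra ℂ E]

theorem mem_corner_iff {a b w : E} : w ∈ corner E a b ↔ ∃ u, a * u * b = w := by
  simp [corner]

theorem mul_mem_corner {a b c w v : E} (hw : w ∈ corner E a b) (hv : v ∈ corner E b c) :
    w * v ∈ corner E a c := by
  obtain ⟨u, rfl⟩ := mem_corner_iff.1 hw
  obtain ⟨u', rfl⟩ := mem_corner_iff.1 hv
  exact mem_corner_iff.2 ⟨u * b * b * u', by noncomm_ring⟩

theorem mul_eq_zero_of_mem_corner {a b b' c w v : E} (hw : w ∈ corner E a b)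
    (hv : v ∈ corner E b' c) (h : b * b' = 0) : w * v = 0 := by
  obtain ⟨u, rfl⟩ := mem_corner_iff.1 hw
  obtain ⟨u', rfl⟩ := mem_corner_iff.1 hv
  calc a * u * b * (b' * u' * c) = a * u * (b * b') * u' * c := by noncomm_ring
    _ = 0 := by rw [h]; noncomm_ring

theorem ne_zero_of_finrank_corner_ne_zero {a b : E} (h : finrank ℂ (corner E a b) ≠ 0) :
    a ≠ 0 := by
  obtain ⟨v, hv, hv0⟩ := exists_mem_ne_zero_of_finrank_ne_zero h
  obtain ⟨u, rfl⟩ := mem_corner_iff.1 hv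
  rintro rfl
  simp at hv0

namespace IsIdempotentElem

variable {a b w : E}

theorem mem_corner_self (ha : IsIdempotentElem a) : a ∈ corner E a a :=
  mem_corner_iff.2 ⟨a, by rw [ha.eq, ha.eq]⟩

theorem mul_of_mem_corner_left (ha : IsIdempotentElem a) (hw : w ∈ corner E a b) :
    a * w = w := by
  obtain ⟨u, rfl⟩ := mem_corner_iff.1 hw
  rw [← mul_assoc, ← mul_assoc, ha.eq]

theorem mul_of_mem_corner_right (hb : IsIdempotentElem b) (hw : w ∈ corner E a b) :
    w * b = w := by
  obtain ⟨u, rfl⟩ := mem_corner_iff.1 hw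
  rw [mul_assoc, hb.eq]

end IsIdempotentElem

namespace OrthogonalIdempotents

variable {I : Type*} [DecidableEq I] {e : I → E}

theorem mul_left_of_mem_corner (he : OrthogonalIdempotents e) {i j : I} {w : E}
    (hw : w ∈ corner E (e i) (e j)) (p : I) : e p * w = if i = p then w else 0 := by
  split_ifs with h
  · exact h ▸ (he.idem i).mul_of_mem_corner_left hw
  · exact mul_eq_zero_of_mem_corner ((he.idem p).mem_corner_self) hw (he.ortho (Ne.symm h))

theorem mul_right_of_mem_corner (he : OrthogonalIdempotents e) {i j : I} {w : E}
    (hw : w ∈ corner E (e i) (e j)) (q : I) : w * e q = if j = q then w else 0 := by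
  split_ifs with h
  · exact h ▸ (he.idem j).mul_of_mem_corner_right hw
  · exact mul_eq_zero_of_mem_corner hw ((he.idem q).mem_corner_self) (he.ortho h)

theorem sum_filter_eq_zero_of_sum_eq_zero (he : OrthogonalIdempotents e) {ι : Type*}
    [Fintype ι] {b : ι → E} {s t : ι → I} (hb : ∀ i, b i ∈ corner E (e (s i)) (e (t i)))
    {g : ι → ℂ} (hg : ∑ i, g i • b i = 0) (p q : I) :
    ∑ i with s i = p ∧ t i = q, g i • b i = 0 := by
  have hproj : e p * (∑ i, g i • b i) * e q = ∑ i with s i = p ∧ t i = q, g i • b i := by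
    rw [Finset.mul_sum, Finset.sum_mul, Finset.sum_filter]
    refine Finset.sum_congr rfl fun i _ => ?_
    rw [mul_smul_comm, smul_mul_assoc, he.mul_left_of_mem_corner (hb i)]
    by_cases hs : s i = p
    · rw [if_pos hs, he.mul_right_of_mem_corner (hb i)]
      by_cases ht : t i = q <;> simp [hs, ht]
    · simp [hs]
  rw [← hproj, hg, mul_zero, zero_mul]

end OrthogonalIdempotents

end Corner

section Nilpotent

variable {K A : Type*} [Field K] [Ring A] [Algebra K A] {a w : A}

theorem IsIdempotentElem.smul_eq_zero_of_isNilpotent (ha : IsIdempotentElem a) {c : K}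
    (h : IsNilpotent (c • a)) : c • a = 0 := by
  rcases eq_or_ne c 0 with rfl | hc
  · exact zero_smul K a
  · rw [ha.eq_zero_of_isNilpotent (by simpa [smul_smul, hc] using h.smul c⁻¹), smul_zero]

/-- Otherwise `c⁻¹ w` would be a nonzero nilpotent idempotent. -/
theorem IsNilpotent.eq_zero_of_mul_self_eq_smul (hw : IsNilpotent w) (hw0 : w ≠ 0) {c : K}
    (h : w * w = c • w) : c = 0 := by
  by_contra hc
  have hidem : IsIdempotentElem (c⁻¹ • w) := by
    rw [IsIdempotentElem, smul_mul_smul_comm, h, smul_smul, mul_assoc, inv_mul_cancel₀ hc,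
      mul_one]
  exact hw0 ((smul_eq_zero.1 (hidem.eq_zero_of_isNilpotent (hw.smul _))).resolve_left
    (inv_ne_zero hc))

theorem IsIdempotentElem.linearIndependent_pair (ha : IsIdempotentElem a) (ha0 : a ≠ 0)
    (hw : IsNilpotent w) (hw0 : w ≠ 0) : LinearIndependent K ![a, w] := by
  refine LinearIndependent.pair_iff.2 fun s t hst => ?_
  have hs : s • a = 0 := ha.smul_eq_zero_of_isNilpotent
    (by rw [eq_neg_of_add_eq_zero_left hst]; exact (hw.smul t).neg)
  rw [hs, zero_add] at hst
  exact ⟨(smul_eq_zero.1 hs).resolve_right ha0, (smul_eq_zero.1 hst).resolve_right hw0⟩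

/-- `s a = (s a + t w) - t w` is nilpotent, as `a` commutes with `w`. -/
theorem IsIdempotentElem.exists_eq_smul_of_isNilpotent (ha : IsIdempotentElem a)
    (haw : a * w = w) (hwa : w * a = w) (hw : IsNilpotent w) {u : A} (hu : u ∈ span K {a, w})
    (hun : IsNilpotent u) : ∃ c : K, u = c • w := by
  obtain ⟨s, t, rfl⟩ := mem_span_pair.1 hu
  have hcomm : Commute (s • a + t • w) (t • w) :=
    (((show Commute a w from haw.trans hwa.symm).smul_left s).smul_right t).add_left
      (((Commute.refl w).smul_left t).smul_right t)
  have hs : s • a = 0 := ha.smul_eq_zero_of_isNilpotent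
    (by simpa using hcomm.isNilpotent_sub hun (hw.smul t))
  exact ⟨t, by rw [hs, zero_add]⟩

end Nilpotent

theorem Submodule.eq_span_pair_of_finrank_eq_two {K V : Type*} [Field K] [AddCommGroup V]
    [Module K V] {S : Submodule K V} {a w : V} (ha : a ∈ S) (hw : w ∈ S)
    (hli : LinearIndependent K ![a, w]) (hS : finrank K S = 2) : S = span K {a, w} := by
  have : FiniteDimensional K S := Module.finite_of_finrank_pos (by omega)
  refine (eq_of_le_of_finrank_le (span_le.2 (Set.insert_subset_iff.2 ⟨ha, by simpa⟩)) ?_).symm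
  rw [hS, ← Matrix.range_cons_cons_empty, finrank_span_eq_card hli, Fintype.card_fin]

section MulTable

variable {ι R A B : Type*} [CommSemiring R] [Semiring A] [Algebra R A] [Semiring B]
  [Algebra R B]

theorem Module.Basis.equiv_mul_of_mulTable (b : Basis ι R A) (b' : Basis ι R B)
    {t : ι → ι → Option ι} (hb : ∀ i j, b i * b j = (t i j).elim 0 b)
    (hb' : ∀ i j, b' i * b' j = (t i j).elim 0 b') (u v : A) :
    b.equiv b' (Equiv.refl ι) (u * v) =
      b.equiv b' (Equiv.refl ι) u * b.equiv b' (Equiv.refl ι) v := by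
  set f := b.equiv b' (Equiv.refl ι)
  have hf : (LinearMap.mul R A).compr₂ f.toLinearMap =
      (LinearMap.mul R B).compl₁₂ f.toLinearMap f.toLinearMap := by
    refine b.ext fun i => b.ext fun j => ?_
    simp only [LinearMap.compr₂_apply, LinearMap.compl₁₂_apply, LinearMap.mul_apply',
      LinearEquiv.coe_coe, f, Basis.equiv_apply, Equiv.refl_apply, hb, hb']
    cases t i j <;> simp
  exact LinearMap.congr_fun₂ hf u v

theorem Module.Basis.exists_algEquiv_of_mulTable (b : Basis ι R A) (b' : Basis ι R B)
    {t : ι → ι → Option ι} (hb : ∀ i j, b i * b j = (t i j).elim 0 b)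
    (hb' : ∀ i j, b' i * b' j = (t i j).elim 0 b') {κ : Type*} [Fintype κ] (f : κ → ι)
    (h1 : ∑ k, b (f k) = 1) (h1' : ∑ k, b' (f k) = 1) :
    ∃ Φ : A ≃ₐ[R] B, ∀ i, Φ (b i) = b' i := by
  have hone : b.equiv b' (Equiv.refl ι) 1 = 1 := by
    simp [← h1, ← h1', map_sum]
  exact ⟨AlgEquiv.ofLinearEquiv _ hone (b.equiv_mul_of_mulTable b' hb hb'),
    fun i => by simp⟩

end MulTable

-- With `N = n + 1`, the arrows between consecutive vertices are indexed by `j : Fin n`,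
-- going between `j.castSucc` and `j.succ`.
namespace CornerData

variable {E : Type*} [Ring E] [Algebra ℂ E] {n : ℕ} {hN : 2 ≤ n + 1} {e : Fin (n + 1) → E}

theorem completeOrthogonalIdempotents (hE : CornerData (n + 1) hN E e) :
    CompleteOrthogonalIdempotents e :=
  CompleteOrthogonalIdempotents.iff_ortho_complete.2
    ⟨fun i j hij => by simpa [hij] using hE.1 i j, hE.2.1⟩

theorem exists_mul_mul_eq_smul (hE : CornerData (n + 1) hN E e) (a : E) :
    ∃ c : ℂ, e 0 * a * e 0 = c • e 0 :=
  hE.2.2.1 a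

theorem finrank_corner_self (hE : CornerData (n + 1) hN E e) {p : Fin (n + 1)} (hp : p ≠ 0) :
    finrank ℂ (corner E (e p) (e p)) = 2 :=
  hE.2.2.2.1 p (Nat.one_le_iff_ne_zero.2 (Fin.val_ne_zero_iff.2 hp))

theorem finrank_corner_castSucc_succ (hE : CornerData (n + 1) hN E e) (j : Fin n) :
    finrank ℂ (corner E (e j.castSucc) (e j.succ)) = 1 :=
  hE.2.2.2.2.1 _ _ (Or.inl rfl)

theorem finrank_corner_succ_castSucc (hE : CornerData (n + 1) hN E e) (j : Fin n) :
    finrank ℂ (corner E (e j.succ) (e j.castSucc)) = 1 :=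
  hE.2.2.2.2.1 _ _ (Or.inr rfl)

theorem corner_eq_bot (hE : CornerData (n + 1) hN E e) {p q : Fin (n + 1)}
    (h : (p : ℕ) + 2 ≤ q ∨ (q : ℕ) + 2 ≤ p) : corner E (e p) (e q) = ⊥ :=
  hE.2.2.2.2.2.1 p q h

theorem mul_ne_zero_and_isNilpotent (hE : CornerData (n + 1) hN E e) {j : Fin n} {x y : E}
    (hx : x ∈ corner E (e j.castSucc) (e j.succ)) (hx0 : x ≠ 0)
    (hy : y ∈ corner E (e j.succ) (e j.castSucc)) (hy0 : y ≠ 0) :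
    y * x ≠ 0 ∧ IsNilpotent (y * x) :=
  (hE.2.2.2.2.2.2 j (by omega) x hx hx0 y hy hy0).imp_right And.left

theorem mul_ne_zero_and_isNilpotent_of_ne_zero (hE : CornerData (n + 1) hN E e) {j : Fin n}
    {x y : E} (hj : (j : ℕ) ≠ 0) (hx : x ∈ corner E (e j.castSucc) (e j.succ)) (hx0 : x ≠ 0)
    (hy : y ∈ corner E (e j.succ) (e j.castSucc)) (hy0 : y ≠ 0) :
    x * y ≠ 0 ∧ IsNilpotent (x * y) :=
  (hE.2.2.2.2.2.2 j (by omega) x hx hx0 y hy hy0).2.2 (by omega)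

theorem ne_zero (hE : CornerData (n + 1) hN E e) (p : Fin (n + 1)) : e p ≠ 0 := by
  cases p using Fin.cases with
  | zero =>
    exact ne_zero_of_finrank_corner_ne_zero
      ((hE.finrank_corner_castSucc_succ ⟨0, by omega⟩).trans_ne one_ne_zero)
  | succ k =>
    exact ne_zero_of_finrank_corner_ne_zero
      ((hE.finrank_corner_self (Fin.succ_ne_zero k)).trans_ne two_ne_zero)

theorem mul_eq_zero_of_mem_corner (hE : CornerData (n + 1) hN E e) {p q q' r : Fin (n + 1)}
    {w v : E} (hw : w ∈ corner E (e p) (e q)) (hv : v ∈ corner E (e q') (e r))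
    (h : q ≠ q' ∨ (p : ℕ) + 2 ≤ r ∨ (r : ℕ) + 2 ≤ p) : w * v = 0 := by
  by_cases hq : q = q'
  · subst hq
    have hwv := mul_mem_corner hw hv
    rwa [hE.corner_eq_bot (by omega), mem_bot] at hwv
  · exact _root_.mul_eq_zero_of_mem_corner hw hv
      (hE.completeOrthogonalIdempotents.ortho hq)

theorem exists_eq_smul_of_isNilpotent (hE : CornerData (n + 1) hN E e) {p : Fin (n + 1)}
    (hp : p ≠ 0) {u w : E} (hu : u ∈ corner E (e p) (e p)) (hun : IsNilpotent u)
    (hw : w ∈ corner E (e p) (e p)) (hwn : IsNilpotent w) (hw0 : w ≠ 0) :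
    ∃ c : ℂ, u = c • w := by
  have hidem := hE.completeOrthogonalIdempotents.idem p
  rw [eq_span_pair_of_finrank_eq_two hidem.mem_corner_self hw
    (hidem.linearIndependent_pair (hE.ne_zero p) hwn hw0) (hE.finrank_corner_self hp)] at hu
  exact hidem.exists_eq_smul_of_isNilpotent (hidem.mul_of_mem_corner_left hw)
    (hidem.mul_of_mem_corner_right hw) hwn hu hun

theorem exists_mul_eq_smul_mul (hE : CornerData (n + 1) hN E e) {j i : Fin n}
    (hij : (i : ℕ) = j + 1) {x y x' y' : E} (hx : x ∈ corner E (e j.castSucc) (e j.succ))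
    (hx0 : x ≠ 0) (hy : y ∈ corner E (e j.succ) (e j.castSucc)) (hy0 : y ≠ 0)
    (hx' : x' ∈ corner E (e i.castSucc) (e i.succ)) (hx'0 : x' ≠ 0)
    (hy' : y' ∈ corner E (e i.succ) (e i.castSucc)) (hy'0 : y' ≠ 0) :
    ∃ c : ℂ, c ≠ 0 ∧ x' * y' = c • (y * x) := by
  have hvertex : i.castSucc = j.succ := Fin.ext hij
  obtain ⟨hu0, hun⟩ := hE.mul_ne_zero_and_isNilpotent_of_ne_zero (by omega) hx' hx'0 hy' hy'0
  obtain ⟨hw0, hwn⟩ := hE.mul_ne_zero_and_isNilpotent hx hx0 hy hy0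
  obtain ⟨c, hc⟩ := hE.exists_eq_smul_of_isNilpotent (Fin.succ_ne_zero j)
    (hvertex ▸ mul_mem_corner hx' hy') hun (mul_mem_corner hy hx) hwn hw0
  exact ⟨c, by rintro rfl; exact hu0 (by simpa using hc), hc⟩

/-- By (i), `x y = c e₀`; then `(y x)² = c (y x)` with `y x` nonzero nilpotent, so `c = 0`. -/
theorem mul_eq_zero_of_val_eq_zero (hE : CornerData (n + 1) hN E e) {j : Fin n}
    (hj : (j : ℕ) = 0) {x y : E} (hx : x ∈ corner E (e j.castSucc) (e j.succ)) (hx0 : x ≠ 0)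
    (hy : y ∈ corner E (e j.succ) (e j.castSucc)) (hy0 : y ≠ 0) : x * y = 0 := by
  have hj0 : j.castSucc = 0 := Fin.ext hj
  have hidem := hE.completeOrthogonalIdempotents.idem j.castSucc
  obtain ⟨c, hc⟩ := hE.exists_mul_mul_eq_smul (x * y)
  rw [← hj0, hidem.mul_of_mem_corner_left (mul_mem_corner hx hy),
    hidem.mul_of_mem_corner_right (mul_mem_corner hx hy)] at hc
  obtain ⟨hyx0, hyxn⟩ := hE.mul_ne_zero_and_isNilpotent hx hx0 hy hy0
  have hsq : y * x * (y * x) = c • (y * x) := by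
    rw [show y * x * (y * x) = y * (x * y) * x by noncomm_ring, hc, mul_smul_comm,
      smul_mul_assoc, hidem.mul_of_mem_corner_right hy]
  rw [hc, hyxn.eq_zero_of_mul_self_eq_smul hyx0 hsq, zero_smul]

end CornerData

section StandardArrows

variable {E : Type*} [Ring E] [Algebra ℂ E] {n : ℕ}

structure IsStandardArrows (e : Fin (n + 1) → E) (x y : Fin n → E) : Prop where
  x_mem : ∀ j, x j ∈ corner E (e j.castSucc) (e j.succ)
  y_mem : ∀ j, y j ∈ corner E (e j.succ) (e j.castSucc)
  x_ne_zero : ∀ j, x j ≠ 0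
  y_ne_zero : ∀ j, y j ≠ 0
  mul_eq_zero : ∀ j : Fin n, (j : ℕ) = 0 → x j * y j = 0
  mul_eq_mul : ∀ j k : Fin n, (j : ℕ) = k + 1 → x j * y j = y k * x k

variable {hN : 2 ≤ n + 1} {e : Fin (n + 1) → E}

/-- With `x_{k+1} y_{k+1} = c_k (y_k x_k)` for arbitrary nonzero arrows, rescale `x_j` by
`∏_{k < j} c_k⁻¹`. -/
theorem CornerData.exists_isStandardArrows (hE : CornerData (n + 1) hN E e) :
    ∃ x y : Fin n → E, IsStandardArrows e x y := by
  choose x₀ hx₀ hx₀0 using fun j => exists_mem_ne_zero_of_finrank_ne_zero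
    ((hE.finrank_corner_castSucc_succ j).trans_ne one_ne_zero)
  choose y hy hy0 using fun j => exists_mem_ne_zero_of_finrank_ne_zero
    ((hE.finrank_corner_succ_castSucc j).trans_ne one_ne_zero)
  have hscale : ∀ k : ℕ, ∃ c : ℂ, c ≠ 0 ∧ ∀ j i : Fin n, (j : ℕ) = k → (i : ℕ) = k + 1 →
      x₀ i * y i = c • (y j * x₀ j) := by
    intro k
    by_cases hk : k + 1 < n
    · obtain ⟨c, hc0, hc⟩ := hE.exists_mul_eq_smul_mul (j := ⟨k, Nat.lt_of_succ_lt hk⟩)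
        (i := ⟨k + 1, hk⟩) rfl (hx₀ _) (hx₀0 _) (hy _) (hy0 _) (hx₀ _) (hx₀0 _) (hy _) (hy0 _)
      refine ⟨c, hc0, fun j i hj hi => ?_⟩
      obtain rfl : j = ⟨k, Nat.lt_of_succ_lt hk⟩ := Fin.ext hj
      obtain rfl : i = ⟨k + 1, hk⟩ := Fin.ext hi
      exact hc
    · exact ⟨1, one_ne_zero, fun j i _ hi => absurd i.isLt (by omega)⟩
  choose c hc0 hc using hscale
  set γ : ℕ → ℂ := fun m => ∏ k ∈ Finset.range m, (c k)⁻¹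
  have hγ0 : ∀ m, γ m ≠ 0 := fun m => Finset.prod_ne_zero_iff.2 fun k _ => inv_ne_zero (hc0 k)
  refine ⟨fun j => γ j • x₀ j, y, fun j => smul_mem _ _ (hx₀ j), hy,
    fun j => smul_ne_zero (hγ0 j) (hx₀0 j), hy0, fun j hj => ?_, fun j k hjk => ?_⟩
  · rw [smul_mul_assoc, hE.mul_eq_zero_of_val_eq_zero hj (hx₀ j) (hx₀0 j) (hy j) (hy0 j),
      smul_zero]
  · rw [smul_mul_assoc, hc k k j rfl hjk, smul_smul, mul_smul_comm, hjk]
    congr 1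
    simp only [γ, Finset.prod_range_succ, mul_assoc, inv_mul_cancel₀ (hc0 k), mul_one]

end StandardArrows

/-- Indices of the basis `e_p`, `z_j = y_j x_j`, `x_j`, `y_j` (in this order) of `E`. -/
abbrev ZigzagIndex (n : ℕ) := Fin (n + 1) ⊕ Fin n ⊕ Fin n ⊕ Fin n

namespace ZigzagIndex

variable {n : ℕ}

def src : ZigzagIndex n → Fin (n + 1)
  | .inl p => p
  | .inr (.inl j) => j.succ
  | .inr (.inr (.inl j)) => j.castSucc
  | .inr (.inr (.inr j)) => j.succ

def tgt : ZigzagIndex n → Fin (n + 1)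
  | .inl p => p
  | .inr (.inl j) => j.succ
  | .inr (.inr (.inl j)) => j.succ
  | .inr (.inr (.inr j)) => j.castSucc

def mulTable : ZigzagIndex n → ZigzagIndex n → Option (ZigzagIndex n)
  | .inl p, j => if src j = p then some j else none
  | i, .inl q => if tgt i = q then some i else none
  | .inr (.inr (.inl i)), .inr (.inr (.inr j)) =>
      if h : i = j ∧ (i : ℕ) ≠ 0 then some (.inr (.inl ⟨i - 1, by omega⟩)) else none
  | .inr (.inr (.inr i)), .inr (.inr (.inl j)) => if i = j then some (.inr (.inl i)) else none
  | _, _ => none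

theorem filter_src_tgt_zero :
    ({i | src i = 0 ∧ tgt i = 0} : Finset (ZigzagIndex n)) = {.inl 0} := by
  ext (r | j | j | j) <;> simp [Finset.mem_filter] <;> simp [src, tgt]

theorem filter_src_tgt_succ (k : Fin n) :
    ({i | src i = k.succ ∧ tgt i = k.succ} : Finset (ZigzagIndex n)) =
      {.inl k.succ, .inr (.inl k)} := by
  ext (r | j | j | j) <;> simp [Finset.mem_filter] <;> simp [src, tgt, Fin.ext_iff] <;> omega

theorem filter_src_tgt_castSucc_succ (k : Fin n) :
    ({i | src i = k.castSucc ∧ tgt i = k.succ} : Finset (ZigzagIndex n)) =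
      {.inr (.inr (.inl k))} := by
  ext (r | j | j | j) <;> simp [Finset.mem_filter] <;> simp [src, tgt, Fin.ext_iff] <;> omega

theorem filter_src_tgt_succ_castSucc (k : Fin n) :
    ({i | src i = k.succ ∧ tgt i = k.castSucc} : Finset (ZigzagIndex n)) =
      {.inr (.inr (.inr k))} := by
  ext (r | j | j | j) <;> simp [Finset.mem_filter] <;> simp [src, tgt, Fin.ext_iff] <;> omega

end ZigzagIndex

section ZigzagBasis

open ZigzagIndex

variable {E : Type*} [Ring E] [Algebra ℂ E] {n : ℕ} {hN : 2 ≤ n + 1} {e : Fin (n + 1) → E}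
  {x y : Fin n → E}

def zigzagFamily (e : Fin (n + 1) → E) (x y : Fin n → E) : ZigzagIndex n → E :=
  Sum.elim e (Sum.elim (fun j => y j * x j) (Sum.elim x y))

namespace IsStandardArrows

theorem x_mul_x (hE : CornerData (n + 1) hN E e) (hxy : IsStandardArrows e x y) (i j : Fin n) :
    x i * x j = 0 :=
  hE.mul_eq_zero_of_mem_corner (hxy.x_mem i) (hxy.x_mem j)
    (by simp only [ne_eq, Fin.ext_iff, Fin.val_castSucc, Fin.val_succ]; omega)

theorem y_mul_y (hE : CornerData (n + 1) hN E e) (hxy : IsStandardArrows e x y) (i j : Fin n) :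
    y i * y j = 0 :=
  hE.mul_eq_zero_of_mem_corner (hxy.y_mem i) (hxy.y_mem j)
    (by simp only [ne_eq, Fin.ext_iff, Fin.val_castSucc, Fin.val_succ]; omega)

theorem y_mul_x (hE : CornerData (n + 1) hN E e) (hxy : IsStandardArrows e x y) (i j : Fin n) :
    y i * x j = if i = j then y i * x i else 0 := by
  split_ifs with h
  · rw [h]
  · exact hE.mul_eq_zero_of_mem_corner (hxy.y_mem i) (hxy.x_mem j)
      (Or.inl (Fin.castSucc_injective n |>.ne h))

theorem x_mul_y (hE : CornerData (n + 1) hN E e) (hxy : IsStandardArrows e x y) (i j : Fin n) :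
    x i * y j = if h : i = j ∧ (i : ℕ) ≠ 0
      then y ⟨i - 1, by omega⟩ * x ⟨i - 1, by omega⟩ else 0 := by
  split_ifs with h
  · obtain ⟨rfl, hi⟩ := h
    exact hxy.mul_eq_mul i _ (Nat.sub_add_cancel (Nat.one_le_iff_ne_zero.2 hi)).symm
  · by_cases hij : i = j
    · subst hij
      exact hxy.mul_eq_zero i (by tauto)
    · exact hE.mul_eq_zero_of_mem_corner (hxy.x_mem i) (hxy.y_mem j)
        (Or.inl ((Fin.succ_injective n).ne hij))

theorem loop_mul_x (hE : CornerData (n + 1) hN E e) (hxy : IsStandardArrows e x y)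
    (i j : Fin n) : y i * x i * x j = 0 := by
  rw [mul_assoc, hxy.x_mul_x hE, mul_zero]

theorem y_mul_loop (hE : CornerData (n + 1) hN E e) (hxy : IsStandardArrows e x y)
    (i j : Fin n) : y i * (y j * x j) = 0 := by
  rw [← mul_assoc, hxy.y_mul_y hE, zero_mul]

theorem x_mul_loop (hE : CornerData (n + 1) hN E e) (hxy : IsStandardArrows e x y)
    (i j : Fin n) : x i * (y j * x j) = 0 := by
  rw [← mul_assoc, hxy.x_mul_y hE]
  split_ifs
  · exact hxy.loop_mul_x hE _ _
  · exact zero_mul _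

theorem loop_mul_y (hE : CornerData (n + 1) hN E e) (hxy : IsStandardArrows e x y)
    (i j : Fin n) : y i * x i * y j = 0 := by
  rw [mul_assoc, hxy.x_mul_y hE]
  split_ifs
  · exact hxy.y_mul_loop hE _ _
  · exact mul_zero _

theorem loop_mul_loop (hE : CornerData (n + 1) hN E e) (hxy : IsStandardArrows e x y)
    (i j : Fin n) : y i * x i * (y j * x j) = 0 := by
  rw [← mul_assoc, hxy.loop_mul_y hE, zero_mul]

theorem zigzagFamily_mem_corner (hE : CornerData (n + 1) hN E e)
    (hxy : IsStandardArrows e x y) (i : ZigzagIndex n) :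
    zigzagFamily e x y i ∈ corner E (e (src i)) (e (tgt i)) := by
  rcases i with p | j | j | j
  · exact (hE.completeOrthogonalIdempotents.idem p).mem_corner_self
  · exact mul_mem_corner (hxy.y_mem j) (hxy.x_mem j)
  · exact hxy.x_mem j
  · exact hxy.y_mem j

theorem zigzagFamily_mul (hE : CornerData (n + 1) hN E e) (hxy : IsStandardArrows e x y)
    (i j : ZigzagIndex n) :
    zigzagFamily e x y i * zigzagFamily e x y j = (mulTable i j).elim 0 (zigzagFamily e x y) := by
  have he := hE.completeOrthogonalIdempotents.toOrthogonalIdempotents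
  rcases i with p | i
  · refine (he.mul_left_of_mem_corner (hxy.zigzagFamily_mem_corner hE j) p).trans ?_
    rcases j with q | j | j | j <;> simp only [mulTable] <;> split_ifs <;> rfl
  rcases j with q | j
  · refine (he.mul_right_of_mem_corner (hxy.zigzagFamily_mem_corner hE (.inr i)) q).trans ?_
    rcases i with i | i | i <;> simp only [mulTable] <;> split_ifs <;> rfl
  rcases i with i | i | i <;> rcases j with j | j | j
  · exact hxy.loop_mul_loop hE i j
  · exact hxy.loop_mul_x hE i j
  · exact hxy.loop_mul_y hE i j
  · exact hxy.x_mul_loop hE i j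
  · exact hxy.x_mul_x hE i j
  · refine (hxy.x_mul_y hE i j).trans ?_
    simp only [mulTable]
    split_ifs <;> rfl
  · exact hxy.y_mul_loop hE i j
  · refine (hxy.y_mul_x hE i j).trans ?_
    simp only [mulTable]
    split_ifs <;> rfl
  · exact hxy.y_mul_y hE i j

theorem corner_le_span_zigzagFamily (hE : CornerData (n + 1) hN E e)
    (hxy : IsStandardArrows e x y) (p q : Fin (n + 1)) :
    corner E (e p) (e q) ≤ span ℂ (Set.range (zigzagFamily e x y)) := by
  have hrange : ∀ i, zigzagFamily e x y i ∈ Set.range (zigzagFamily e x y) :=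
    Set.mem_range_self
  obtain rfl | hpq := eq_or_ne p q
  · cases p using Fin.cases with
    | zero =>
      intro w hw
      obtain ⟨u, rfl⟩ := mem_corner_iff.1 hw
      obtain ⟨c, hc⟩ := hE.exists_mul_mul_eq_smul u
      exact hc ▸ smul_mem _ c (subset_span (hrange (.inl 0)))
    | succ k =>
      have hidem := hE.completeOrthogonalIdempotents.idem k.succ
      obtain ⟨hz0, hzn⟩ := hE.mul_ne_zero_and_isNilpotent (hxy.x_mem k) (hxy.x_ne_zero k)
        (hxy.y_mem k) (hxy.y_ne_zero k)
      rw [eq_span_pair_of_finrank_eq_two hidem.mem_corner_self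
        (mul_mem_corner (hxy.y_mem k) (hxy.x_mem k))
        (hidem.linearIndependent_pair (hE.ne_zero _) hzn hz0)
        (hE.finrank_corner_self (Fin.succ_ne_zero k))]
      exact span_mono (Set.insert_subset_iff.2 ⟨hrange (.inl k.succ),
        Set.singleton_subset_iff.2 (hrange (.inr (.inl k)))⟩)
  have hpq' : (p : ℕ) ≠ q := Fin.val_ne_of_ne hpq
  by_cases hup : (p : ℕ) + 1 = q
  · obtain ⟨j, rfl, rfl⟩ : ∃ j : Fin n, j.castSucc = p ∧ j.succ = q :=
      ⟨⟨p, by omega⟩, rfl, Fin.ext hup⟩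
    rw [eq_span_singleton_of_mem_of_finrank_eq_one (hE.finrank_corner_castSucc_succ j)
      (hxy.x_mem j) (hxy.x_ne_zero j)]
    exact span_mono (Set.singleton_subset_iff.2 (hrange (.inr (.inr (.inl j)))))
  by_cases hdown : (q : ℕ) + 1 = p
  · obtain ⟨j, rfl, rfl⟩ : ∃ j : Fin n, j.succ = p ∧ j.castSucc = q :=
      ⟨⟨q, by omega⟩, Fin.ext hdown, rfl⟩
    rw [eq_span_singleton_of_mem_of_finrank_eq_one (hE.finrank_corner_succ_castSucc j)
      (hxy.y_mem j) (hxy.y_ne_zero j)]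
    exact span_mono (Set.singleton_subset_iff.2 (hrange (.inr (.inr (.inr j)))))
  rw [hE.corner_eq_bot (by omega)]
  exact bot_le

theorem span_zigzagFamily (hE : CornerData (n + 1) hN E e) (hxy : IsStandardArrows e x y) :
    ⊤ ≤ span ℂ (Set.range (zigzagFamily e x y)) := by
  intro a _
  rw [← hE.completeOrthogonalIdempotents.sum_sum_mul_mul a]
  exact sum_mem fun p _ => sum_mem fun q _ =>
    hxy.corner_le_span_zigzagFamily hE p q (mem_corner_iff.2 ⟨a, rfl⟩)

theorem linearIndependent_zigzagFamily (hE : CornerData (n + 1) hN E e)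
    (hxy : IsStandardArrows e x y) : LinearIndependent ℂ (zigzagFamily e x y) := by
  refine Fintype.linearIndependent_iff.2 fun g hg => ?_
  have he := hE.completeOrthogonalIdempotents
  have hfib := he.toOrthogonalIdempotents.sum_filter_eq_zero_of_sum_eq_zero
    (hxy.zigzagFamily_mem_corner hE) hg
  have hloop : ∀ k : Fin n, g (.inl k.succ) = 0 ∧ g (.inr (.inl k)) = 0 := by
    intro k
    have hk := hfib k.succ k.succ
    rw [filter_src_tgt_succ, Finset.sum_pair (by simp)] at hk
    obtain ⟨hz0, hzn⟩ := hE.mul_ne_zero_and_isNilpotent (hxy.x_mem k) (hxy.x_ne_zero k)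
      (hxy.y_mem k) (hxy.y_ne_zero k)
    exact LinearIndependent.pair_iff.1
      ((he.idem _).linearIndependent_pair (hE.ne_zero _) hzn hz0) _ _ hk
  rintro (p | k | j | j)
  · cases p using Fin.cases with
    | zero =>
      have h0 := hfib 0 0
      rw [filter_src_tgt_zero, Finset.sum_singleton] at h0
      exact (smul_eq_zero.1 h0).resolve_right (hE.ne_zero 0)
    | succ k => exact (hloop k).1
  · exact (hloop k).2
  · have hj := hfib j.castSucc j.succ
    rw [filter_src_tgt_castSucc_succ, Finset.sum_singleton] at hj
    exact (smul_eq_zero.1 hj).resolve_right (hxy.x_ne_zero j)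
  · have hj := hfib j.succ j.castSucc
    rw [filter_src_tgt_succ_castSucc, Finset.sum_singleton] at hj
    exact (smul_eq_zero.1 hj).resolve_right (hxy.y_ne_zero j)

end IsStandardArrows

theorem CornerData.exists_basis_mulTable (hE : CornerData (n + 1) hN E e) :
    ∃ b : Basis (ZigzagIndex n) ℂ E, (∀ p, b (.inl p) = e p) ∧
      ∀ i j, b i * b j = (ZigzagIndex.mulTable i j).elim 0 b := by
  obtain ⟨x, y, hxy⟩ := hE.exists_isStandardArrows
  refine ⟨Basis.mk (hxy.linearIndependent_zigzagFamily hE) (hxy.span_zigzagFamily hE),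
    fun p => by simp [zigzagFamily], fun i j => ?_⟩
  simp only [Basis.coe_mk]
  exact hxy.zigzagFamily_mul hE i j

end ZigzagBasis

theorem stmt10_general (N : ℕ) (hN : 2 ≤ N)
    (E : Type*) [Ring E] [Algebra ℂ E] (e : Fin N → E)
    (E' : Type*) [Ring E'] [Algebra ℂ E'] (e' : Fin N → E')
    (hE : CornerData N hN E e) (hE' : CornerData N hN E' e') :
    (∃ Φ : E ≃ₐ[ℂ] E', ∀ i : Fin N, Φ (e i) = e' i) ∧
      Module.finrank ℂ E = 4 * N - 3 := by
  obtain ⟨n, rfl⟩ : ∃ n, N = n + 1 := ⟨N - 1, by omega⟩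
  obtain ⟨b, hbe, hb⟩ := hE.exists_basis_mulTable
  obtain ⟨b', hbe', hb'⟩ := hE'.exists_basis_mulTable
  obtain ⟨Φ, hΦ⟩ := b.exists_algEquiv_of_mulTable b' hb hb' Sum.inl
    (by simpa [hbe] using hE.completeOrthogonalIdempotents.complete)
    (by simpa [hbe'] using hE'.completeOrthogonalIdempotents.complete)
  refine ⟨⟨Φ, fun p => by rw [← hbe, hΦ, hbe']⟩, ?_⟩
  rw [finrank_eq_card_basis b]
  simp only [Fintype.card_sum, Fintype.card_fin]
  omega

/-- Any two finite-dimensional ℂ-algebras with complete families of orthogonal idempotents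
satisfying (i)–(iv) for the same `N ≥ 2` are isomorphic via an isomorphism matching the
idempotents; in particular the dimension is `4N − 3`. -/
theorem stmt10 (N : ℕ) (hN : 2 ≤ N)
    (E : Type*) [Ring E] [Algebra ℂ E] [FiniteDimensional ℂ E] (e : Fin N → E)
    (E' : Type*) [Ring E'] [Algebra ℂ E'] [FiniteDimensional ℂ E'] (e' : Fin N → E')
    (hE : CornerData N hN E e) (hE' : CornerData N hN E' e') :
    (∃ Φ : E ≃ₐ[ℂ] E', ∀ i : Fin N, Φ (e i) = e' i) ∧
      Module.finrank ℂ E = 4 * N - 3 :=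
  stmt10_general N hN E e E' e' hE hE'
end
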